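/- Under the hypotheses of the single-vehicle kinematic model (reference wheel at origin with steering θ₁, second wheel at (a₂,b₂) with steering θ₂, yaw rate ψ̇ = v sin(θ₂-θ₁)/(a₂ cos θ₂ + b₂ sin θ₂)), any third wheel at body coordinates (a_k, b_k) with steering angle θ_k satisfying its own no-slip constraint must obey (tan θ_k - tan θ₁)/(tan θ₂ - tan θ₁) = (a_k + b_k tan θ_k)/(a₂ + b₂ tan θ₂), provided all cosines and denominators involved are nonzero. -/

import Mathlib

open Real

/-!
Substituting the velocity of the reference wheel, the heading ψ drops out of the no-slip
constraint of wheel k, which becomes `v sin (θ₁ - θk) + ψ̇ (ak cos θk + bk sin θk) = 0`.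
Inserting the yaw rate and cancelling `v` gives
`sin (θk - θ₁) (a₂ cos θ₂ + b₂ sin θ₂) = sin (θ₂ - θ₁) (ak cos θk + bk sin θk)`,
and dividing by `cos θ₁ cos θ₂ cos θk` turns every sine of a difference into a difference of
tangents and every `a cos θ + b sin θ` into `a + b tan θ`.
-/

namespace Real

theorem neg_cos_mul_sin_add_sin_mul_cos (ψ α β : ℝ) :
    -cos (ψ + α) * sin (ψ + β) + sin (ψ + α) * cos (ψ + β) = sin (α - β) := by
  rw [show α - β = (ψ + α) - (ψ + β) by ring, sin_sub]
  ring

theorem tan_sub_tan_eq {x y : ℝ} (hx : cos x ≠ 0) (hy : cos y ≠ 0) :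
    tan x - tan y = sin (x - y) / (cos x * cos y) := by
  rw [sin_sub, tan_eq_sin_div_cos, tan_eq_sin_div_cos]
  field_simp

theorem add_mul_tan_eq (a b : ℝ) {θ : ℝ} (h : cos θ ≠ 0) :
    a + b * tan θ = (a * cos θ + b * sin θ) / cos θ := by
  rw [tan_eq_sin_div_cos]
  field_simp

end Real

theorem tan_sub_tan_eq_of_sin_sub_eq {θ₁ θ₂ θ a₂ b₂ a b : ℝ}
    (hc₁ : cos θ₁ ≠ 0) (hc₂ : cos θ₂ ≠ 0) (hc : cos θ ≠ 0)
    (h : sin (θ - θ₁)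
      = sin (θ₂ - θ₁) * (a * cos θ + b * sin θ) / (a₂ * cos θ₂ + b₂ * sin θ₂)) :
    tan θ - tan θ₁ = (tan θ₂ - tan θ₁) * ((a + b * tan θ) / (a₂ + b₂ * tan θ₂)) := by
  rw [tan_sub_tan_eq hc hc₁, tan_sub_tan_eq hc₂ hc₁, add_mul_tan_eq a b hc,
    add_mul_tan_eq a₂ b₂ hc₂, h, div_div_div_eq]
  field_simp

theorem generalized_ackermann_condition_general
    (ψ θ₁ θ₂ θk a₂ b₂ ak bk v xdot ydot ψdot : ℝ)
    (hv : v ≠ 0)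
    (hx : xdot = v * Real.cos (ψ + θ₁))
    (hy : ydot = v * Real.sin (ψ + θ₁))
    (hψ : ψdot = v * Real.sin (θ₂ - θ₁) / (a₂ * Real.cos θ₂ + b₂ * Real.sin θ₂))
    (hk : -xdot * Real.sin (ψ + θk) + ydot * Real.cos (ψ + θk)
      + ψdot * (ak * Real.cos θk + bk * Real.sin θk) = 0)
    (hc1 : Real.cos θ₁ ≠ 0) (hc2 : Real.cos θ₂ ≠ 0) (hck : Real.cos θk ≠ 0)
    (htan : Real.tan θ₂ - Real.tan θ₁ ≠ 0) :
    (Real.tan θk - Real.tan θ₁) / (Real.tan θ₂ - Real.tan θ₁)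
      = (ak + bk * Real.tan θk) / (a₂ + b₂ * Real.tan θ₂) := by
  subst hx hy hψ
  have hψ_free : v * sin (θ₁ - θk)
      + v * sin (θ₂ - θ₁) / (a₂ * cos θ₂ + b₂ * sin θ₂) * (ak * cos θk + bk * sin θk) = 0 := by
    rw [← neg_cos_mul_sin_add_sin_mul_cos ψ]
    linear_combination hk
  have hsin : sin (θk - θ₁)
      = sin (θ₂ - θ₁) * (ak * cos θk + bk * sin θk) / (a₂ * cos θ₂ + b₂ * sin θ₂) := by
    apply mul_left_cancel₀ hv
    rw [← neg_sub, sin_neg]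
    linear_combination -hψ_free
  rw [div_eq_iff htan, tan_sub_tan_eq_of_sin_sub_eq hc1 hc2 hck hsin]
  ring

/-- Generalized Ackermann steering condition: any further wheel of a single
rigid vehicle satisfying its own no-slip constraint must have a dependent
steering angle related to the two independent ones. -/
theorem generalized_ackermann_condition
    (ψ θ₁ θ₂ θk a₂ b₂ ak bk v xdot ydot ψdot : ℝ)
    (hv : v ≠ 0)
    (hx : xdot = v * Real.cos (ψ + θ₁))
    (hy : ydot = v * Real.sin (ψ + θ₁))
    (hden : a₂ * Real.cos θ₂ + b₂ * Real.sin θ₂ ≠ 0)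
    (hψ : ψdot = v * Real.sin (θ₂ - θ₁) / (a₂ * Real.cos θ₂ + b₂ * Real.sin θ₂))
    (hk : -xdot * Real.sin (ψ + θk) + ydot * Real.cos (ψ + θk)
      + ψdot * (ak * Real.cos θk + bk * Real.sin θk) = 0)
    (hc1 : Real.cos θ₁ ≠ 0) (hc2 : Real.cos θ₂ ≠ 0) (hck : Real.cos θk ≠ 0)
    (htan : Real.tan θ₂ - Real.tan θ₁ ≠ 0)
    (hden2 : a₂ + b₂ * Real.tan θ₂ ≠ 0) :
    (Real.tan θk - Real.tan θ₁) / (Real.tan θ₂ - Real.tan θ₁)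
      = (ak + bk * Real.tan θk) / (a₂ + b₂ * Real.tan θ₂) :=
  generalized_ackermann_condition_general ψ θ₁ θ₂ θk a₂ b₂ ak bk v xdot ydot ψdot hv hx hy hψ hk hc1
    hc2 hck htan
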